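/- Let Θ be a random angle with Kato–Jones density g_KJ(·; μ, γ, λ, ρ). Then the circular kurtosis and circular skewness of Batschelet satisfy ᾱ₂ := E[cos 2(Θ − μ)] = ρ γ cos λ and β̄₂ := E[sin 2(Θ − μ)] = ρ γ sin λ. -/

import Mathlib

/-!
Write `z = exp (i (θ - μ))` and `w = ρ exp (i λ)`. Since `|z - w|² = 1 + ρ² - 2ρ cos (θ - μ - λ)`
and `Re (z - w) = cos (θ - μ) - ρ cos λ`, the Kato–Jones density is
`(2π)⁻¹ (1 + γ ((z - w)⁻¹ + (conj z - conj w)⁻¹))`. On the unit circle `conj z = z⁻¹`, so the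
moment `E[z ^ (n + 1)]` is a contour integral over `|z| = 1` whose only singularity inside the disc
is the simple pole at `w`; Cauchy's integral formula gives `E[z ^ (n + 1)] = γ w ^ n`. The case
`n = 1`, split into real and imaginary parts, is the theorem.
-/

/-- The Kato–Jones density. -/
noncomputable def gKJ (μ γ lam ρ θ : ℝ) : ℝ :=
  (1 / (2 * Real.pi)) *
    (1 + 2 * γ * (Real.cos (θ - μ) - ρ * Real.cos lam) /
      (1 + ρ ^ 2 - 2 * ρ * Real.cos (θ - μ - lam)))

open Complex Real MeasureTheory
open scoped ComplexConjugate

noncomputable def katoJonesKernel (γ : ℝ) (w z : ℂ) : ℂ :=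
  1 + γ * ((z - w)⁻¹ + (conj z - conj w)⁻¹)

lemma Complex.inv_add_inv_conj (a : ℂ) : a⁻¹ + (conj a)⁻¹ = ((2 * a.re / normSq a : ℝ) : ℂ) := by
  rw [← map_inv₀, add_conj, inv_re]; push_cast; ring

lemma one_add_sq_sub_two_mul_cos_pos {ρ : ℝ} (hρ : |ρ| < 1) (x : ℝ) :
    0 < 1 + ρ ^ 2 - 2 * ρ * Real.cos x := by
  nlinarith [sq_abs ρ, abs_mul_abs_self ρ, abs_le.mp (Real.abs_cos_le_one x), abs_nonneg ρ,
    neg_abs_le ρ, le_abs_self ρ]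

lemma continuous_gKJ (μ γ lam : ℝ) {ρ : ℝ} (hρ : |ρ| < 1) : Continuous (gKJ μ γ lam ρ) := by
  have := fun θ => (one_add_sq_sub_two_mul_cos_pos hρ (θ - μ - lam)).ne'
  unfold gKJ
  fun_prop (disch := assumption)

lemma ofReal_gKJ (μ γ lam ρ θ : ℝ) :
    (gKJ μ γ lam ρ θ : ℂ) =
      (2 * π)⁻¹ * katoJonesKernel γ (ρ * exp (lam * I)) (exp ((θ - μ : ℝ) * I)) := by
  have hnormSq : normSq (exp ((θ - μ : ℝ) * I) - ρ * exp (lam * I)) =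
      1 + ρ ^ 2 - 2 * ρ * Real.cos (θ - μ - lam) := by
    rw [normSq_apply, Real.cos_sub]
    simp only [sub_re, sub_im, exp_ofReal_mul_I_re, exp_ofReal_mul_I_im, re_ofReal_mul,
      im_ofReal_mul]
    linear_combination Real.sin_sq_add_cos_sq (θ - μ) + ρ ^ 2 * Real.sin_sq_add_cos_sq lam
  rw [katoJonesKernel, ← map_sub, inv_add_inv_conj, hnormSq]
  simp only [sub_re, exp_ofReal_mul_I_re, re_ofReal_mul, gKJ]
  push_cast
  ring

lemma one_sub_conj_mul_ne_zero {w z : ℂ} (hw : ‖w‖ < 1) (hz : ‖z‖ ≤ 1) : 1 - conj w * z ≠ 0 := by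
  intro h
  have : ‖conj w * z‖ < 1 := by
    rw [norm_mul, RCLike.norm_conj]; nlinarith [norm_nonneg w, norm_nonneg z]
  rw [← sub_eq_zero.mp h, norm_one] at this
  exact this.false

theorem integral_exp_pow_mul_katoJonesKernel (γ : ℝ) {w : ℂ} (hw : ‖w‖ < 1) (n : ℕ) :
    ∫ θ in (0 : ℝ)..2 * π, exp (θ * I) ^ (n + 1) * katoJonesKernel γ w (exp (θ * I)) =
      2 * π * γ * w ^ n := by
  -- On `|z| = 1`, `(z - w)⁻¹ * f z = z ^ n * katoJonesKernel γ w z`, and `f w = γ * w ^ n`.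
  set f : ℂ → ℂ := fun z => (z - w) * z ^ n * (1 + γ * z / (1 - conj w * z)) + γ * z ^ n
  have hf : DiffContOnCl ℂ f (Metric.ball 0 1) := by
    refine DifferentiableOn.diffContOnCl ?_
    rw [closure_ball _ one_ne_zero]
    intro z hz
    have := one_sub_conj_mul_ne_zero hw (by simpa using hz)
    exact DifferentiableAt.differentiableWithinAt (by fun_prop (disch := assumption))
  have hcauchy := hf.circleIntegral_sub_inv_smul (by simpa using hw)
  have hintegrand : ∀ θ : ℝ,
      deriv (circleMap 0 1) θ • ((circleMap 0 1 θ - w)⁻¹ • f (circleMap 0 1 θ)) =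
        I * (exp (θ * I) ^ (n + 1) * katoJonesKernel γ w (exp (θ * I))) := by
    intro θ
    have hz : ‖exp (θ * I)‖ = 1 := norm_exp_ofReal_mul_I θ
    have hzw : exp (θ * I) - w ≠ 0 := by
      intro h; rw [sub_eq_zero.mp h] at hz; linarith
    have hconj : conj (exp (θ * I)) = (exp (θ * I))⁻¹ := by
      rw [← exp_conj, ← Complex.exp_neg]; simp
    have hden := one_sub_conj_mul_ne_zero hw hz.le
    have hz0 := exp_ne_zero (θ * I)
    simp only [deriv_circleMap, circleMap, zero_add, ofReal_one, one_mul, smul_eq_mul, f,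
      katoJonesKernel, hconj]
    field_simp
    ring
  rw [circleIntegral] at hcauchy
  simp only [hintegrand, intervalIntegral.integral_const_mul] at hcauchy
  refine mul_left_cancel₀ I_ne_zero (hcauchy.trans ?_)
  simp only [f, sub_self, zero_mul, zero_add, smul_eq_mul]
  ring

theorem Function.Periodic.intervalIntegral_neg_pi_pi_comp_sub {E : Type*} [NormedAddCommGroup E]
    [NormedSpace ℝ E] {f : ℝ → E} (hf : Function.Periodic f (2 * π)) (μ : ℝ) :
    ∫ θ in -π..π, f (θ - μ) = ∫ ψ in 0..2 * π, f ψ := by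
  rw [intervalIntegral.integral_comp_sub_right, show π - μ = -π - μ + 2 * π by ring,
    hf.intervalIntegral_add_eq (-π - μ) 0, zero_add]

theorem integral_exp_mul_gKJ (μ γ lam : ℝ) {ρ : ℝ} (hρ : |ρ| < 1) (n : ℕ) :
    ∫ θ in -π..π, exp (((n + 1) * (θ - μ) : ℝ) * I) * gKJ μ γ lam ρ θ =
      γ * (ρ * exp (lam * I)) ^ n := by
  set w : ℂ := ρ * exp (lam * I)
  have hw : ‖w‖ < 1 := by simpa [w, norm_exp_ofReal_mul_I] using hρ
  set K : ℝ → ℂ := fun ψ =>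
    (2 * π)⁻¹ * (exp (ψ * I) ^ (n + 1) * katoJonesKernel γ w (exp (ψ * I)))
  have hexp : Function.Periodic (fun ψ : ℝ => exp (ψ * I)) (2 * π) := fun ψ => by
    simpa using exp_mul_I_periodic (ψ : ℂ)
  have hK : Function.Periodic K (2 * π) :=
    hexp.comp fun z => (2 * π)⁻¹ * (z ^ (n + 1) * katoJonesKernel γ w z)
  have hpoint : ∀ θ : ℝ, exp (((n + 1) * (θ - μ) : ℝ) * I) * gKJ μ γ lam ρ θ = K (θ - μ) := by
    intro θ
    have hpow : exp (((n + 1) * (θ - μ) : ℝ) * I) = exp ((θ - μ : ℝ) * I) ^ (n + 1) := by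
      rw [← Complex.exp_nat_mul]; push_cast; ring_nf
    rw [hpow, ofReal_gKJ]
    ring
  rw [intervalIntegral.integral_congr (fun θ _ => hpoint θ),
    hK.intervalIntegral_neg_pi_pi_comp_sub, intervalIntegral.integral_const_mul,
    integral_exp_pow_mul_katoJonesKernel γ hw]
  push_cast
  field_simp

theorem kato_jones_circular_skewness_kurtosis_general
    (μ γ lam ρ : ℝ)
    (hρ : ρ ∈ Set.Ico (0 : ℝ) 1) :
    (∫ θ in (-Real.pi)..Real.pi, Real.cos (2 * (θ - μ)) * gKJ μ γ lam ρ θ) =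
      ρ * γ * Real.cos lam ∧
    (∫ θ in (-Real.pi)..Real.pi, Real.sin (2 * (θ - μ)) * gKJ μ γ lam ρ θ) =
      ρ * γ * Real.sin lam := by
  have hρ' : |ρ| < 1 := abs_lt.mpr ⟨by linarith [hρ.1], hρ.2⟩
  have hmoment : ∫ θ in -π..π, exp ((2 * (θ - μ) : ℝ) * I) * gKJ μ γ lam ρ θ =
      γ * (ρ * exp (lam * I)) := by
    simpa only [Nat.cast_one, one_add_one_eq_two, pow_one] using
      integral_exp_mul_gKJ μ γ lam hρ' 1
  have hint : IntervalIntegrable (fun θ : ℝ => exp ((2 * (θ - μ) : ℝ) * I) * gKJ μ γ lam ρ θ)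
      volume (-π) π :=
    (by have := continuous_gKJ μ γ lam hρ'; fun_prop : Continuous _).intervalIntegrable _ _
  constructor
  · have hre := intervalIntegral.intervalIntegral_re hint
    simp only [RCLike.re_to_complex, re_mul_ofReal, exp_ofReal_mul_I_re, hmoment,
      re_ofReal_mul] at hre
    rw [hre]; ring
  · have him := intervalIntegral.intervalIntegral_im hint
    simp only [RCLike.im_to_complex, im_mul_ofReal, exp_ofReal_mul_I_im, hmoment,
      im_ofReal_mul] at him
    rw [him]; ring

/-- For the Kato–Jones distribution, the circular kurtosis `ᾱ₂ = E[cos 2(Θ − μ)]` equals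
`ρ γ cos λ` and the circular skewness `β̄₂ = E[sin 2(Θ − μ)]` equals `ρ γ sin λ`. -/
theorem kato_jones_circular_skewness_kurtosis
    (μ γ lam ρ : ℝ)
    (hμ : μ ∈ Set.Ico (-Real.pi) Real.pi)
    (hγ : γ ∈ Set.Ico (0 : ℝ) 1)
    (hρ : ρ ∈ Set.Ico (0 : ℝ) 1)
    (hlam : lam ∈ Set.Ico (-Real.pi) Real.pi)
    (hconstraint : (ρ * Real.cos lam - γ) ^ 2 + (ρ * Real.sin lam) ^ 2 ≤ (1 - γ) ^ 2) :
    (∫ θ in (-Real.pi)..Real.pi, Real.cos (2 * (θ - μ)) * gKJ μ γ lam ρ θ) =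
      ρ * γ * Real.cos lam ∧
    (∫ θ in (-Real.pi)..Real.pi, Real.sin (2 * (θ - μ)) * gKJ μ γ lam ρ θ) =
      ρ * γ * Real.sin lam :=
  kato_jones_circular_skewness_kurtosis_general μ γ lam ρ hρ
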